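/- arXiv:2603.15136 — 2 statements merged into one kernel-verified Lean document; each statement's English description precedes it below -/
import Mathlib

section
/- Let s_1, ..., s_n, s_{n+1} be exchangeable real-valued random variables and let \hat{q} be the \lceil (n+1)(1-\alpha) \rceil-th smallest value among s_1, ..., s_n, where \alpha \in (0,1) with \lceil (n+1)(1-\alpha) \rceil \le n. Then P(s_{n+1} \le \hat{q}) \ge 1 - \alpha. -/
open MeasureTheory Finset
open scoped ENNReal

lemma conformal_count (n k : ℕ) (hk1 : 1 ≤ k) (hkn : k ≤ n + 1) (x : Fin (n+1) → ℝ) :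
    k ≤ (univ.filter fun j => (univ.filter fun i => x i < x j).card ≤ k - 1).card := by
  have hmono := Tuple.monotone_sort x
  set σ := Tuple.sort x with hσ
  have hsrc : (Finset.Iic (⟨k-1, by omega⟩ : Fin (n+1))).card = k := by
    simp [Fin.card_Iic]; omega
  rw [← hsrc]
  refine Finset.card_le_card_of_injOn σ ?_ (σ.injective.injOn)
  intro m hm
  have hmk : (m : ℕ) ≤ k - 1 := by
    simpa [Fin.le_def] using hm
  simp only [Finset.mem_coe, Finset.mem_filter, Finset.mem_univ, true_and]
  have hcard : (univ.filter fun i => x i < x (σ m)).card ≤ (Finset.Iio m).card := by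
    refine Finset.card_le_card_of_injOn σ.symm ?_ (σ.symm.injective.injOn)
    intro i hi
    simp only [Finset.mem_coe, Finset.mem_filter, Finset.mem_univ, true_and] at hi
    simp only [Finset.mem_coe, Finset.mem_Iio]
    by_contra h
    push_neg at h
    have := hmono h
    simp only [Function.comp] at this
    rw [Equiv.apply_symm_apply] at this
    exact absurd hi (not_lt.2 this)
  rw [Fin.card_Iio] at hcard
  omega

lemma conformal_meas (n k : ℕ) (j : Fin (n+1)) :
    MeasurableSet {x : Fin (n+1) → ℝ | (univ.filter fun i => x i < x j).card ≤ k - 1} := by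
  have h : Measurable fun x : Fin (n+1) → ℝ => (univ.filter fun i => x i < x j).card := by
    simp only [Finset.card_filter]
    exact Finset.measurable_sum _ fun i _ =>
      Measurable.ite (measurableSet_lt (measurable_pi_apply i) (measurable_pi_apply j))
        measurable_const measurable_const
  exact h (MeasurableSet.of_discrete (s := {m | m ≤ k - 1}))

lemma conformal_perm (n : ℕ) (σ : Equiv.Perm (Fin (n+1))) (t : ℝ) (x : Fin (n+1) → ℝ) :
    (univ.filter fun i => x (σ i) < t).card = (univ.filter fun i => x i < t).card := by
  refine Finset.card_equiv σ fun i => ?_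
  simp

/-- Split conformal prediction coverage: for exchangeable scores `s 0, …, s n`
(`n` calibration scores plus one test score), the test score is at most the
`⌈(n+1)(1-α)⌉`-th smallest calibration score with probability at least `1 - α`. -/
theorem stmt_9 {Ω : Type*} [MeasurableSpace Ω] (ℙ : Measure Ω) [IsProbabilityMeasure ℙ]
    (n : ℕ) (s : Ω → Fin (n + 1) → ℝ) (hmeas : Measurable s)
    (hexch : ∀ σ : Equiv.Perm (Fin (n + 1)),
      Measure.map (fun ω i => s ω (σ i)) ℙ = Measure.map s ℙ)
    (α : ℝ) (hα : α ∈ Set.Ioo (0:ℝ) 1)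
    (k : ℕ) (hk : k = ⌈((n : ℝ) + 1) * (1 - α)⌉₊) (hk1 : 1 ≤ k) (hkn : k ≤ n) :
    ENNReal.ofReal (1 - α) ≤
      ℙ {ω | s ω (Fin.last n) ≤
        (fun i : Fin n => s ω i.castSucc)
          (Tuple.sort (fun i : Fin n => s ω i.castSucc) ⟨k - 1, by omega⟩)} := by
  obtain ⟨hα0, hα1⟩ := hα
  set B : Fin (n+1) → Set (Fin (n+1) → ℝ) :=
    fun j => {x | (univ.filter fun i => x i < x j).card ≤ k - 1} with hBdef
  have hBmeas : ∀ j, MeasurableSet (B j) := fun j => conformal_meas n k j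
  -- all events have equal probability, by exchangeability
  have hEeq : ∀ j : Fin (n+1), ℙ (s ⁻¹' B j) = ℙ (s ⁻¹' B (Fin.last n)) := by
    intro j
    set σ : Equiv.Perm (Fin (n+1)) := Equiv.swap (Fin.last n) j with hσdef
    have hpre : (fun ω => fun i => s ω (σ i)) ⁻¹' B (Fin.last n) = s ⁻¹' B j := by
      ext ω
      simp only [Set.mem_preimage, hBdef, Set.mem_setOf_eq]
      rw [conformal_perm n σ (s ω (σ (Fin.last n))) (s ω)]
      simp only [hσdef, Equiv.swap_apply_left]
    have hσmeas : Measurable fun ω => fun i => s ω (σ i) :=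
      measurable_pi_lambda _ fun i => (measurable_pi_apply (σ i)).comp hmeas
    calc ℙ (s ⁻¹' B j) = ℙ ((fun ω i => s ω (σ i)) ⁻¹' B (Fin.last n)) := by rw [hpre]
    _ = (Measure.map (fun ω i => s ω (σ i)) ℙ) (B (Fin.last n)) :=
        (Measure.map_apply hσmeas (hBmeas _)).symm
    _ = (Measure.map s ℙ) (B (Fin.last n)) := by rw [hexch σ]
    _ = ℙ (s ⁻¹' B (Fin.last n)) := Measure.map_apply hmeas (hBmeas _)
  -- lower bound on the sum of probabilities
  have hsum : (k : ℝ≥0∞) ≤ ∑ j, ℙ (s ⁻¹' B j) := by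
    have hpt : ∀ ω, (k : ℝ≥0∞) ≤ ∑ j, (s ⁻¹' B j).indicator (1 : Ω → ℝ≥0∞) ω := by
      intro ω
      have h1 : ∑ j, (s ⁻¹' B j).indicator (1 : Ω → ℝ≥0∞) ω
          = ((univ.filter fun j : Fin (n+1) =>
              (univ.filter fun i => s ω i < s ω j).card ≤ k - 1).card : ℝ≥0∞) := by
        rw [Finset.card_filter]
        push_cast
        refine Finset.sum_congr rfl fun j _ => ?_
        simp [Set.indicator_apply, hBdef]
      rw [h1]
      exact_mod_cast conformal_count n k hk1 (by omega) (s ω)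
    calc (k:ℝ≥0∞) = ∫⁻ _, (k:ℝ≥0∞) ∂ℙ := by simp
    _ ≤ ∫⁻ ω, ∑ j, (s ⁻¹' B j).indicator 1 ω ∂ℙ := lintegral_mono hpt
    _ = ∑ j, ∫⁻ ω, (s ⁻¹' B j).indicator 1 ω ∂ℙ :=
        lintegral_finset_sum _ fun j _ => measurable_one.indicator (hmeas (hBmeas j))
    _ = ∑ j, ℙ (s ⁻¹' B j) := Finset.sum_congr rfl fun j _ => by
        exact lintegral_indicator_one (hmeas (hBmeas j))
  have hlastsum : ∑ j : Fin (n+1), ℙ (s ⁻¹' B j) = ((n:ℝ≥0∞)+1) * ℙ (s ⁻¹' B (Fin.last n)) := by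
    rw [Finset.sum_congr rfl fun j _ => hEeq j, Finset.sum_const, Finset.card_univ,
      Fintype.card_fin, nsmul_eq_mul]
    push_cast; ring
  have hdiv : (k:ℝ≥0∞) / ((n:ℝ≥0∞)+1) ≤ ℙ (s ⁻¹' B (Fin.last n)) := by
    rw [hlastsum] at hsum
    refine ENNReal.div_le_of_le_mul ?_
    rwa [mul_comm] at hsum
  have hsub : s ⁻¹' B (Fin.last n) ⊆ {ω | s ω (Fin.last n) ≤
      (fun i : Fin n => s ω i.castSucc)
        (Tuple.sort (fun i : Fin n => s ω i.castSucc) ⟨k - 1, by omega⟩)} := by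
    intro ω hω
    simp only [Set.mem_preimage, hBdef, Set.mem_setOf_eq] at hω
    set y : Fin n → ℝ := fun i => s ω i.castSucc with hy
    simp only [Set.mem_setOf_eq]
    by_contra hcon
    push_neg at hcon
    have hmono := Tuple.monotone_sort y
    have hk2 : k ≤ (univ.filter fun i : Fin (n+1) => s ω i < s ω (Fin.last n)).card := by
      have hc : (Finset.Iic (⟨k-1, by omega⟩ : Fin n)).card = k := by
        simp [Fin.card_Iic]; omega
      rw [← hc]
      refine Finset.card_le_card_of_injOn (fun m => (Tuple.sort y m).castSucc) ?_ ?_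
      · intro m hm
        simp only [Finset.mem_coe, Finset.mem_Iic] at hm
        simp only [Finset.mem_coe, Finset.mem_filter, Finset.mem_univ, true_and]
        have hle : y (Tuple.sort y m) ≤ y (Tuple.sort y ⟨k-1, by omega⟩) := hmono hm
        exact lt_of_le_of_lt hle hcon
      · exact fun a _ b _ hab => (Tuple.sort y).injective (Fin.castSucc_injective n hab)
    omega
  calc ENNReal.ofReal (1 - α) ≤ (k:ℝ≥0∞) / ((n:ℝ≥0∞)+1) := by
        have hk' : ((n:ℝ)+1) * (1-α) ≤ k := by rw [hk]; exact Nat.le_ceil _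
        have h2 : (1-α) ≤ (k:ℝ)/((n:ℝ)+1) := by
          rw [le_div_iff₀ (by positivity)]
          nlinarith
        calc ENNReal.ofReal (1-α) ≤ ENNReal.ofReal ((k:ℝ)/((n:ℝ)+1)) :=
              ENNReal.ofReal_le_ofReal h2
        _ = (k:ℝ≥0∞) / ((n:ℝ≥0∞)+1) := by
            rw [ENNReal.ofReal_div_of_pos (by positivity)]
            congr 1
            · exact ENNReal.ofReal_natCast k
            · rw [show ((n:ℝ)+1) = ((n+1 : ℕ):ℝ) by push_cast; ring, ENNReal.ofReal_natCast]
              push_cast; ring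
  _ ≤ ℙ (s ⁻¹' B (Fin.last n)) := hdiv
  _ ≤ _ := measure_mono hsub
end

section
/- Let T be the operator on bounded functions V : X \to \mathbb{R} given by (T V)(x) = max(\ell(x), \gamma V(f(x))) for a map f : X \to X, bounded \ell, and \gamma \in (0,1). Then T has a unique bounded fixed point V^*, and V^*(x) = \sup_{t \ge 0} \gamma^t \ell(f^t(x)), where f^t is the t-fold iterate of f. -/
/-!
The discounted value `V* x = ⨆ t, γ ^ t * ℓ (f^[t] x)` splits into its `t = 0` term and the
discounted value at `f x`, which is exactly the Bellman equation. For uniqueness, the map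
`a ↦ max (ℓ x) (γ * a)` is `γ`-Lipschitz, so the gap `|V x - V* x|` between two bounded
solutions is at most `γ` times the gap at `f x`; iterating gives `|V x - V* x| ≤ γ ^ n * M`
for all `n`, hence `0`.
-/

open Filter Topology

theorem ciSup_nat_eq_sup_ciSup_succ {α : Type*} [ConditionallyCompleteLattice α] {u : ℕ → α}
    (hu : BddAbove (Set.range u)) : ⨆ n, u n = u 0 ⊔ ⨆ n, u (n + 1) := by
  have hsucc : BddAbove (Set.range fun n => u (n + 1)) :=
    hu.mono (Set.range_comp_subset_range _ u)
  apply le_antisymm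
  · refine ciSup_le fun n => ?_
    cases n with
    | zero => exact le_sup_left
    | succ n => exact le_sup_of_le_right (le_ciSup hsucc n)
  · exact sup_le (le_ciSup hu 0) (ciSup_le fun n => le_ciSup hu (n + 1))

theorem abs_max_sub_max_mul_le {a b c γ : ℝ} (hγ : 0 ≤ γ) :
    |max a (γ * b) - max a (γ * c)| ≤ γ * |b - c| :=
  calc |max a (γ * b) - max a (γ * c)| = |max (γ * b) a - max (γ * c) a| := by
        rw [max_comm a, max_comm a]
    _ ≤ |γ * b - γ * c| := abs_max_sub_max_le_abs _ _ _
    _ = γ * |b - c| := by rw [← mul_sub, abs_mul, abs_of_nonneg hγ]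

theorem le_zero_of_le_mul_comp {X : Type*} {f : X → X} {d : X → ℝ} {M γ : ℝ}
    (hd : ∀ x, d x ≤ M) (hγ0 : 0 ≤ γ) (hγ1 : γ < 1) (h : ∀ x, d x ≤ γ * d (f x)) (x : X) :
    d x ≤ 0 := by
  have hpow : ∀ n : ℕ, ∀ x, d x ≤ γ ^ n * M := by
    intro n
    induction n with
    | zero => simpa using hd
    | succ n ih =>
      intro x
      calc d x ≤ γ * d (f x) := h x
        _ ≤ γ * (γ ^ n * M) := mul_le_mul_of_nonneg_left (ih (f x)) hγ0
        _ = γ ^ (n + 1) * M := by ring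
  have hlim : Tendsto (fun n : ℕ => γ ^ n * M) atTop (𝓝 0) := by
    simpa using (tendsto_pow_atTop_nhds_zero_of_lt_one hγ0 hγ1).mul_const M
  exact ge_of_tendsto' hlim fun n => hpow n x

theorem abs_pow_mul_le {γ a B : ℝ} (hγ0 : 0 ≤ γ) (hγ1 : γ ≤ 1) (ha : |a| ≤ B) (t : ℕ) :
    |γ ^ t * a| ≤ B := by
  rw [abs_mul, abs_of_nonneg (pow_nonneg hγ0 t)]
  exact (mul_le_of_le_one_left (abs_nonneg a) (pow_le_one₀ hγ0 hγ1)).trans ha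

section DiscountedValue

variable {X : Type*} (f : X → X) (ℓ : X → ℝ) (γ : ℝ)

noncomputable def discountedValue (x : X) : ℝ :=
  ⨆ t : ℕ, γ ^ t * ℓ (f^[t] x)

variable {f ℓ γ} {B : ℝ}

theorem bddAbove_range_discounted (hℓ : ∀ x, |ℓ x| ≤ B) (hγ0 : 0 ≤ γ) (hγ1 : γ ≤ 1) (x : X) :
    BddAbove (Set.range fun t : ℕ => γ ^ t * ℓ (f^[t] x)) :=
  ⟨B, by rintro _ ⟨t, rfl⟩; exact (abs_le.mp (abs_pow_mul_le hγ0 hγ1 (hℓ _) t)).2⟩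

theorem abs_discountedValue_le (hℓ : ∀ x, |ℓ x| ≤ B) (hγ0 : 0 ≤ γ) (hγ1 : γ ≤ 1) (x : X) :
    |discountedValue f ℓ γ x| ≤ B := by
  have hbound := fun t => abs_le.mp (abs_pow_mul_le hγ0 hγ1 (hℓ (f^[t] x)) t)
  refine abs_le.mpr ⟨?_, ciSup_le fun t => (hbound t).2⟩
  calc -B ≤ γ ^ 0 * ℓ (f^[0] x) := (hbound 0).1
    _ ≤ discountedValue f ℓ γ x := le_ciSup (bddAbove_range_discounted hℓ hγ0 hγ1 x) 0

theorem discountedValue_eq_max (hℓ : ∀ x, |ℓ x| ≤ B) (hγ0 : 0 ≤ γ) (hγ1 : γ ≤ 1) (x : X) :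
    discountedValue f ℓ γ x = max (ℓ x) (γ * discountedValue f ℓ γ (f x)) := by
  have hshift : ∀ t : ℕ, γ ^ (t + 1) * ℓ (f^[t + 1] x) = γ * (γ ^ t * ℓ (f^[t] (f x))) := by
    intro t
    rw [Function.iterate_succ_apply, pow_succ]
    ring
  rw [discountedValue, ciSup_nat_eq_sup_ciSup_succ (bddAbove_range_discounted hℓ hγ0 hγ1 x)]
  simp only [hshift, pow_zero, one_mul, Function.iterate_zero_apply, discountedValue,
    Real.mul_iSup_of_nonneg hγ0]

theorem eq_discountedValue_of_eq_max (hℓ : ∀ x, |ℓ x| ≤ B) (hγ0 : 0 ≤ γ) (hγ1 : γ < 1)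
    {V : X → ℝ} {C : ℝ} (hVC : ∀ x, |V x| ≤ C) (hV : ∀ x, V x = max (ℓ x) (γ * V (f x))) :
    V = discountedValue f ℓ γ := by
  set W := discountedValue f ℓ γ
  have hW : ∀ x, |W x| ≤ B := abs_discountedValue_le hℓ hγ0 hγ1.le
  have hWfix : ∀ x, W x = max (ℓ x) (γ * W (f x)) := discountedValue_eq_max hℓ hγ0 hγ1.le
  have hgap : ∀ x, |V x - W x| ≤ γ * |V (f x) - W (f x)| := fun x => by
    rw [hV x, hWfix x]
    exact abs_max_sub_max_mul_le hγ0
  funext x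
  have hgap0 : |V x - W x| ≤ 0 :=
    le_zero_of_le_mul_comp (fun y => (abs_sub _ _).trans (add_le_add (hVC y) (hW y)))
      hγ0 hγ1 hgap x
  linarith [abs_nonpos_iff.mp hgap0]

end DiscountedValue

/-- The discounted deterministic HJ safety Bellman operator
`(TV)(x) = max(ℓ(x), γ V(f(x)))` has a unique bounded fixed point, given in closed form
by `V*(x) = ⨆ t, γ^t ℓ(f^[t](x))`. -/
theorem stmt_17 {X : Type*} (f : X → X) (ℓ : X → ℝ)
    (B : ℝ) (hℓ : ∀ x, |ℓ x| ≤ B) (γ : ℝ) (hγ : γ ∈ Set.Ioo (0:ℝ) 1) :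
    (∀ x, (⨆ t : ℕ, γ ^ t * ℓ (f^[t] x)) =
        max (ℓ x) (γ * ⨆ t : ℕ, γ ^ t * ℓ (f^[t] (f x)))) ∧
    (∀ V : X → ℝ, (∃ C, ∀ x, |V x| ≤ C) →
      (∀ x, V x = max (ℓ x) (γ * V (f x))) →
      V = fun x => ⨆ t : ℕ, γ ^ t * ℓ (f^[t] x)) := by
  obtain ⟨hγ0, hγ1⟩ := hγ
  exact ⟨discountedValue_eq_max hℓ hγ0.le hγ1.le,
    fun V ⟨_, hVC⟩ hV => eq_discountedValue_of_eq_max hℓ hγ0.le hγ1 hVC hV⟩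
end
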